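/- Each of the three maps K₁, K₂, K₃ is a bounded smooth map from ℝ² to ℝ³ that solves the linearized H-system at the degree-2 bubble: L_W[K] = ΔK − 2 W_x ∧ K_y − 2 K_x ∧ W_y = 0 at every point of ℝ². -/

import Mathlib

noncomputable section

/-- `ℝ³` with the Euclidean norm. -/
abbrev R3 : Type := EuclideanSpace ℝ (Fin 3)

/-- The vector in `ℝ³` with the given coordinates. -/
def e3 (a b c : ℝ) : R3 := (WithLp.equiv 2 (Fin 3 → ℝ)).symm ![a, b, c]

/-- The cross product on `ℝ³`. -/
def cross (a b : R3) : R3 :=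
  e3 (a 1 * b 2 - a 2 * b 1) (a 2 * b 0 - a 0 * b 2) (a 0 * b 1 - a 1 * b 0)

/-- Partial derivative in the `x` direction, identifying `ℝ²` with `ℂ` via `z = x + iy`. -/
def pdx (u : ℂ → R3) (z : ℂ) : R3 := fderiv ℝ u z 1

/-- Partial derivative in the `y` direction. -/
def pdy (u : ℂ → R3) (z : ℂ) : R3 := fderiv ℝ u z Complex.I

/-- Componentwise Laplacian. -/
def lap (u : ℂ → R3) (z : ℂ) : R3 := pdx (pdx u) z + pdy (pdy u) z

/-- The degree-2 H-bubble `W = π(z²)`. -/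
def W : ℂ → R3 := fun z =>
  e3 (2 * (z.re ^ 2 - z.im ^ 2) / ((z.re ^ 2 + z.im ^ 2) ^ 2 + 1))
    (4 * z.re * z.im / ((z.re ^ 2 + z.im ^ 2) ^ 2 + 1))
    (((z.re ^ 2 + z.im ^ 2) ^ 2 - 1) / ((z.re ^ 2 + z.im ^ 2) ^ 2 + 1))

/-- The linearized H-system operator at the degree-2 bubble `W`:
`L_W[v] = Δv − 2 Wₓ ∧ v_y − 2 vₓ ∧ W_y`. -/
def LW (v : ℂ → R3) (z : ℂ) : R3 :=
  lap v z - (2 : ℝ) • cross (pdx W z) (pdy v z) - (2 : ℝ) • cross (pdx v z) (pdy W z)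

/-- `v` is a bounded smooth global solution of the linearized H-system at `W`. -/
def IsBoundedSmoothKernel (v : ℂ → R3) : Prop :=
  (∃ C : ℝ, ∀ z, ‖v z‖ ≤ C) ∧ ContDiff ℝ (⊤ : ℕ∞) v ∧ ∀ z, LW v z = 0


def K1 : ℂ → R3 := fun z =>
  let x := z.re; let y := z.im; let D := (x ^ 2 + y ^ 2) ^ 2 + 1
  e3 (2 * (x ^ 2 - y ^ 2) * ((x ^ 2 + y ^ 2) ^ 2 - 1) / D ^ 2)
    (4 * x * y * ((x ^ 2 + y ^ 2) ^ 2 - 1) / D ^ 2)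
    (((x ^ 2 + y ^ 2) ^ 2 - 1) ^ 2 / D ^ 2)

def K2 : ℂ → R3 := fun z =>
  let x := z.re; let y := z.im; let D := (x ^ 2 + y ^ 2) ^ 2 + 1
  e3 (2 * (x ^ 2 - y ^ 2) ^ 2 / D ^ 2)
    (4 * x * y * (x ^ 2 - y ^ 2) / D ^ 2)
    ((x ^ 2 - y ^ 2) * ((x ^ 2 + y ^ 2) ^ 2 - 1) / D ^ 2)

def K3 : ℂ → R3 := fun z =>
  let x := z.re; let y := z.im; let D := (x ^ 2 + y ^ 2) ^ 2 + 1
  e3 (4 * x * y * (x ^ 2 - y ^ 2) / D ^ 2)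
    (8 * x ^ 2 * y ^ 2 / D ^ 2)
    (2 * x * y * ((x ^ 2 + y ^ 2) ^ 2 - 1) / D ^ 2)

/-!
Each `Kᵢ` has the form `⟪a, W⟫ • W` for a constant vector `a` (namely `e₃`, `e₁ / 2`, `e₂ / 2`).
`W` is inverse stereographic projection composed with `z ↦ z²`, hence a unit-length map satisfying
the conformality relation `W_y = W_x ∧ W`. For any such map `u`, differentiating
`u_y = u_x ∧ u` in `y` and `u_x = u ∧ u_y` in `x` gives the H-system
`Δu = 2 u_x ∧ u_y = -2 |u_x|² u`, and with it the product-rule expansion of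
`Δv − 2 u_x ∧ v_y − 2 v_x ∧ u_y` for `v = ⟪a, u⟫ • u` cancels term by term.
Boundedness of `⟪a, u⟫ • u` is Cauchy–Schwarz.
-/

open Complex
open scoped InnerProductSpace ContDiff

namespace R3

lemma ext' {a b : R3} (h0 : a 0 = b 0) (h1 : a 1 = b 1) (h2 : a 2 = b 2) : a = b := by
  ext i; fin_cases i <;> assumption

@[simp] lemma e3_apply_zero (a b c : ℝ) : e3 a b c 0 = a := rfl
@[simp] lemma e3_apply_one (a b c : ℝ) : e3 a b c 1 = b := rfl
@[simp] lemma e3_apply_two (a b c : ℝ) : e3 a b c 2 = c := rfl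

lemma inner_eq (a b : R3) : ⟪a, b⟫_ℝ = a 0 * b 0 + a 1 * b 1 + a 2 * b 2 := by
  simp [PiLp.inner_apply, Fin.sum_univ_three]; ring

lemma cross_anticomm (a b : R3) : cross a b = -cross b a := by
  apply ext' <;> simp [cross] <;> ring

lemma cross_cross (a b c : R3) : cross a (cross b c) = ⟪a, c⟫_ℝ • b - ⟪a, b⟫_ℝ • c := by
  apply ext' <;> simp [cross, inner_eq] <;> ring

def crossL : R3 →L[ℝ] R3 →L[ℝ] R3 :=
  LinearMap.toContinuousLinearMap <| LinearMap.toContinuousLinearMap.toLinearMap ∘ₗ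
    LinearMap.mk₂ ℝ cross
      (fun a b c => by apply ext' <;> simp [cross] <;> ring)
      (fun r a b => by apply ext' <;> simp [cross] <;> ring)
      (fun a b c => by apply ext' <;> simp [cross] <;> ring)
      (fun r a b => by apply ext' <;> simp [cross] <;> ring)

@[simp] lemma crossL_apply (a b : R3) : crossL a b = cross a b := rfl

end R3

section Bilinear

variable {E F G H : Type*} [NormedAddCommGroup E] [NormedSpace ℝ E] [NormedAddCommGroup F]
  [NormedSpace ℝ F] [NormedAddCommGroup G] [NormedSpace ℝ G] [NormedAddCommGroup H]
  [NormedSpace ℝ H] (B : F →L[ℝ] G →L[ℝ] H) {f : E → F} {g : E → G}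

lemma ContDiff.differentiable_fderiv_apply {f : E → F} (hf : ContDiff ℝ 2 f) (v : E) :
    Differentiable ℝ fun y => fderiv ℝ f y v :=
  ((hf.fderiv_right (m := 1) (by norm_num)).clm_apply contDiff_const).differentiable
    (by norm_num)

lemma fderiv_bilinear_apply {x : E} (hf : DifferentiableAt ℝ f x) (hg : DifferentiableAt ℝ g x)
    (v : E) :
    fderiv ℝ (fun y => B (f y) (g y)) x v =
      B (fderiv ℝ f x v) (g x) + B (f x) (fderiv ℝ g x v) := by
  rw [B.fderiv_of_bilinear hf hg]
  simp [add_comm]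

lemma fderiv_fderiv_bilinear_apply (hf : ContDiff ℝ 2 f) (hg : ContDiff ℝ 2 g) (x v : E) :
    fderiv ℝ (fun y => fderiv ℝ (fun y => B (f y) (g y)) y v) x v =
      B (fderiv ℝ (fun y => fderiv ℝ f y v) x v) (g x)
        + (2 : ℝ) • B (fderiv ℝ f x v) (fderiv ℝ g x v)
        + B (f x) (fderiv ℝ (fun y => fderiv ℝ g y v) x v) := by
  have hf1 := hf.differentiable (by norm_num)
  have hg1 := hg.differentiable (by norm_num)
  have hf2 := hf.differentiable_fderiv_apply v
  have hg2 := hg.differentiable_fderiv_apply v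
  simp_rw [fderiv_bilinear_apply B (hf1 _) (hg1 _)]
  rw [fderiv_fun_add (by fun_prop) (by fun_prop), add_apply,
    fderiv_bilinear_apply B (hf2 x) (hg1 x), fderiv_bilinear_apply B (hf1 x) (hg2 x)]
  module

lemma fderiv_fderiv_apply_comm {f : E → F} (hf : ContDiff ℝ 2 f) (x v w : E) :
    fderiv ℝ (fun y => fderiv ℝ f y v) x w = fderiv ℝ (fun y => fderiv ℝ f y w) x v := by
  have h1 := (hf.fderiv_right (m := 1) (by norm_num)).differentiable (by norm_num) x
  rw [fderiv_clm_apply h1 (differentiableAt_const v),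
    fderiv_clm_apply h1 (differentiableAt_const w)]
  simpa using (hf.contDiffAt.isSymmSndFDerivAt (by simp)) w v

end Bilinear

section PartialDerivatives

variable (B : R3 →L[ℝ] R3 →L[ℝ] R3) {f g : ℂ → R3}

lemma pdx_bilinear {z : ℂ} (hf : DifferentiableAt ℝ f z) (hg : DifferentiableAt ℝ g z) :
    pdx (fun z => B (f z) (g z)) z = B (pdx f z) (g z) + B (f z) (pdx g z) :=
  fderiv_bilinear_apply B hf hg 1

lemma pdy_bilinear {z : ℂ} (hf : DifferentiableAt ℝ f z) (hg : DifferentiableAt ℝ g z) :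
    pdy (fun z => B (f z) (g z)) z = B (pdy f z) (g z) + B (f z) (pdy g z) :=
  fderiv_bilinear_apply B hf hg I

lemma lap_bilinear (hf : ContDiff ℝ 2 f) (hg : ContDiff ℝ 2 g) (z : ℂ) :
    lap (fun z => B (f z) (g z)) z = B (lap f z) (g z)
      + (2 : ℝ) • (B (pdx f z) (pdx g z) + B (pdy f z) (pdy g z)) + B (f z) (lap g z) := by
  have hxx : pdx (pdx fun z => B (f z) (g z)) z =
      B (pdx (pdx f) z) (g z) + (2 : ℝ) • B (pdx f z) (pdx g z) + B (f z) (pdx (pdx g) z) :=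
    fderiv_fderiv_bilinear_apply B hf hg z 1
  have hyy : pdy (pdy fun z => B (f z) (g z)) z =
      B (pdy (pdy f) z) (g z) + (2 : ℝ) • B (pdy f z) (pdy g z) + B (f z) (pdy (pdy g) z) :=
    fderiv_fderiv_bilinear_apply B hf hg z I
  simp only [lap, hxx, hyy, map_add, add_apply]
  module

end PartialDerivatives

lemma pdy_pdx_eq_pdx_pdy {u : ℂ → R3} (hu : ContDiff ℝ 2 u) (z : ℂ) :
    pdy (pdx u) z = pdx (pdy u) z :=
  fderiv_fderiv_apply_comm hu z 1 I

def innerSmulL (a : R3) : R3 →L[ℝ] R3 →L[ℝ] R3 := (ContinuousLinearMap.lsmul ℝ ℝ).comp (innerSL ℝ a)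

@[simp] lemma innerSmulL_apply (a p q : R3) : innerSmulL a p q = ⟪a, p⟫_ℝ • q := rfl

/-- `LW` with the bubble `W` replaced by an arbitrary map `u`. -/
def linearizedH (u v : ℂ → R3) (z : ℂ) : R3 :=
  lap v z - (2 : ℝ) • cross (pdx u z) (pdy v z) - (2 : ℝ) • cross (pdx v z) (pdy u z)

section ConformalSphereMap

variable {u : ℂ → R3} (hnorm : ∀ z, ‖u z‖ = 1) (hconf : ∀ z, pdy u z = cross (pdx u z) (u z))
include hnorm

lemma inner_pdx_eq_zero {z : ℂ} (hu : DifferentiableAt ℝ u z) : ⟪u z, pdx u z⟫_ℝ = 0 := by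
  have hconst : (fun z => ⟪u z, u z⟫_ℝ) = fun _ => 1 := by
    funext z; rw [real_inner_self_eq_norm_sq, hnorm, one_pow]
  have := fderiv_inner_apply ℝ hu hu 1
  rw [hconst, fderiv_fun_const, Pi.zero_apply, zero_apply,
    real_inner_comm (u z)] at this
  unfold pdx; linarith

include hconf

lemma pdx_eq_cross {z : ℂ} (hu : DifferentiableAt ℝ u z) : pdx u z = cross (u z) (pdy u z) := by
  rw [hconf, R3.cross_cross, real_inner_self_eq_norm_sq, hnorm, inner_pdx_eq_zero hnorm hu]
  simp

lemma cross_pdx_pdy {z : ℂ} (hu : DifferentiableAt ℝ u z) :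
    cross (pdx u z) (pdy u z) = -(‖pdx u z‖ ^ 2) • u z := by
  rw [hconf, R3.cross_cross, real_inner_comm, inner_pdx_eq_zero hnorm hu,
    real_inner_self_eq_norm_sq]
  simp

/-- The H-system: in `∂ₓ(u ∧ u_y) + ∂_y(uₓ ∧ u)` the mixed-derivative terms cancel. -/
lemma lap_eq_two_smul_cross (hu : ContDiff ℝ 2 u) (z : ℂ) :
    lap u z = (2 : ℝ) • cross (pdx u z) (pdy u z) := by
  have hu1 := hu.differentiable (by norm_num)
  have hx : pdx u = fun z => R3.crossL (u z) (pdy u z) :=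
    funext fun z => pdx_eq_cross hnorm hconf (hu1 z)
  have hy : pdy u = fun z => R3.crossL (pdx u z) (u z) := funext hconf
  have hxx : pdx (pdx u) z = cross (pdx u z) (pdy u z) + cross (u z) (pdx (pdy u) z) := by
    conv_lhs => rw [hx]
    exact pdx_bilinear R3.crossL (hu1 z) (hu.differentiable_fderiv_apply I z)
  have hyy : pdy (pdy u) z = cross (pdy (pdx u) z) (u z) + cross (pdx u z) (pdy u z) := by
    conv_lhs => rw [hy]
    exact pdy_bilinear R3.crossL (hu.differentiable_fderiv_apply 1 z) (hu1 z)
  rw [lap, hxx, hyy, pdy_pdx_eq_pdx_pdy hu, R3.cross_anticomm (pdx (pdy u) z)]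
  module

lemma linearizedH_inner_smul_eq_zero (hu : ContDiff ℝ 2 u) (a : R3) (z : ℂ) :
    linearizedH u (fun z => ⟪a, u z⟫_ℝ • u z) z = 0 := by
  have hu1 := hu.differentiable (by norm_num)
  have hv : (fun z => ⟪a, u z⟫_ℝ • u z) = fun z => innerSmulL a (u z) (u z) := rfl
  rw [linearizedH, hv, lap_bilinear _ hu hu, pdx_bilinear _ (hu1 z) (hu1 z),
    pdy_bilinear _ (hu1 z) (hu1 z), lap_eq_two_smul_cross hnorm hconf hu,
    cross_pdx_pdy hnorm hconf (hu1 z)]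
  simp only [innerSmulL_apply, inner_smul_right, ← R3.crossL_apply]
  simp only [map_add, map_smul, add_apply, smul_apply, R3.crossL_apply]
  rw [← hconf, ← pdx_eq_cross hnorm hconf (hu1 z), cross_pdx_pdy hnorm hconf (hu1 z)]
  module

end ConformalSphereMap

lemma contDiff_e3 {E : Type*} [NormedAddCommGroup E] [NormedSpace ℝ E] {n : WithTop ℕ∞}
    {f g h : E → ℝ} (hf : ContDiff ℝ n f) (hg : ContDiff ℝ n g) (hh : ContDiff ℝ n h) :
    ContDiff ℝ n fun x => e3 (f x) (g x) (h x) :=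
  contDiff_euclidean.2 fun i => by fin_cases i <;> assumption

lemma e3_eq_add (a b c : ℝ) : e3 a b c = a • e3 1 0 0 + b • e3 0 1 0 + c • e3 0 0 1 := by
  apply R3.ext' <;> simp

lemma hasFDerivAt_e3 {E : Type*} [NormedAddCommGroup E] [NormedSpace ℝ E] {f g h : E → ℝ}
    {f' g' h' : E →L[ℝ] ℝ} {x : E} (hf : HasFDerivAt f f' x) (hg : HasFDerivAt g g' x)
    (hh : HasFDerivAt h h' x) :
    HasFDerivAt (fun x => e3 (f x) (g x) (h x))
      (f'.smulRight (e3 1 0 0) + g'.smulRight (e3 0 1 0) + h'.smulRight (e3 0 0 1)) x := by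
  rw [show (fun x => e3 (f x) (g x) (h x)) =
      fun x => f x • e3 1 0 0 + g x • e3 0 1 0 + h x • e3 0 0 1 from funext fun _ => e3_eq_add ..]
  exact ((hf.smul_const _).add (hg.smul_const _)).add (hh.smul_const _)

def invStereo (w : ℂ) : R3 :=
  (w.re ^ 2 + w.im ^ 2 + 1)⁻¹ • e3 (2 * w.re) (2 * w.im) (w.re ^ 2 + w.im ^ 2 - 1)

lemma norm_invStereo (w : ℂ) : ‖invStereo w‖ = 1 := by
  have hN : w.re ^ 2 + w.im ^ 2 + 1 ≠ 0 := by positivity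
  refine (pow_left_inj₀ (norm_nonneg _) zero_le_one two_ne_zero).1 ?_
  rw [← real_inner_self_eq_norm_sq, R3.inner_eq]
  simp [invStereo]
  field_simp
  ring

lemma contDiff_invStereo : ContDiff ℝ ∞ invStereo := by
  have hre : ContDiff ℝ ∞ fun w : ℂ => w.re := reCLM.contDiff
  have him : ContDiff ℝ ∞ fun w : ℂ => w.im := imCLM.contDiff
  have hN : ContDiff ℝ ∞ fun w : ℂ => (w.re ^ 2 + w.im ^ 2 + 1)⁻¹ :=
    ContDiff.inv (by fun_prop) fun w => by positivity
  exact hN.smul (contDiff_e3 (by fun_prop) (by fun_prop) (by fun_prop))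

lemma fderiv_invStereo_I_mul (w h : ℂ) :
    fderiv ℝ invStereo w (I * h) = cross (fderiv ℝ invStereo w h) (invStereo w) := by
  have hN : w.re ^ 2 + w.im ^ 2 + 1 ≠ 0 := by positivity
  have hre : HasFDerivAt (fun w : ℂ => w.re) reCLM w := reCLM.hasFDerivAt
  have him : HasFDerivAt (fun w : ℂ => w.im) imCLM w := imCLM.hasFDerivAt
  have hNd := ((hre.pow 2).add (him.pow 2)).add_const 1
  have hP := hasFDerivAt_e3 (hre.const_mul 2) (him.const_mul 2)
    (((hre.pow 2).add (him.pow 2)).sub_const 1)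
  have hd : HasFDerivAt invStereo _ w := ((hasDerivAt_inv hN).comp_hasFDerivAt w hNd).smul hP
  rw [hd.fderiv]
  apply R3.ext' <;> simp [cross, invStereo] <;> field_simp <;> ring

lemma pdy_invStereo_comp {g : ℂ → ℂ} {g' z : ℂ} (hg : HasDerivAt g g' z) :
    pdy (fun z => invStereo (g z)) z =
      cross (pdx (fun z => invStereo (g z)) z) (invStereo (g z)) := by
  have hc : HasFDerivAt (fun z => invStereo (g z)) _ z :=
    ((contDiff_invStereo.differentiable (by simp)) (g z)).hasFDerivAt.comp z
      (hg.hasFDerivAt.restrictScalars ℝ)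
  unfold pdx pdy
  rw [hc.fderiv]
  simpa using fderiv_invStereo_I_mul (g z) g'

lemma W_eq_invStereo_sq : W = fun z => invStereo (z ^ 2) := by
  funext z
  apply R3.ext' <;> simp [W, invStereo, pow_two] <;> field_simp <;> ring

lemma contDiff_W : ContDiff ℝ ∞ W := by
  rw [W_eq_invStereo_sq]
  exact contDiff_invStereo.comp (by fun_prop)

lemma norm_W (z : ℂ) : ‖W z‖ = 1 := by
  rw [W_eq_invStereo_sq, norm_invStereo]

lemma pdy_W (z : ℂ) : pdy W z = cross (pdx W z) (W z) := by
  rw [W_eq_invStereo_sq]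
  exact pdy_invStereo_comp (hasDerivAt_pow 2 z)

lemma isBoundedSmoothKernel_inner_smul (a : R3) :
    IsBoundedSmoothKernel fun z => ⟪a, W z⟫_ℝ • W z := by
  have hW : ContDiff ℝ 2 W := contDiff_W.of_le (by norm_cast)
  refine ⟨⟨‖a‖, fun z => ?_⟩, (contDiff_const.inner ℝ contDiff_W).smul contDiff_W,
    linearizedH_inner_smul_eq_zero norm_W pdy_W hW a⟩
  rw [norm_smul, norm_W, mul_one, Real.norm_eq_abs]
  simpa [norm_W] using abs_real_inner_le_norm a (W z)

lemma K1_eq : K1 = fun z => ⟪e3 0 0 1, W z⟫_ℝ • W z := by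
  funext z
  apply R3.ext' <;> simp [K1, W, R3.inner_eq] <;> field_simp

lemma K2_eq : K2 = fun z => ⟪e3 (1 / 2) 0 0, W z⟫_ℝ • W z := by
  funext z
  apply R3.ext' <;> simp [K2, W, R3.inner_eq] <;> field_simp

lemma K3_eq : K3 = fun z => ⟪e3 0 (1 / 2) 0, W z⟫_ℝ • W z := by
  funext z
  apply R3.ext' <;> simp [K3, W, R3.inner_eq] <;> field_simp <;> ring

/-- Each of the three maps `K₁, K₂, K₃` is a bounded smooth solution of the linearized
H-system `L_W[K] = 0` at the degree-2 bubble `W`. -/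
theorem K_kernels_bounded_smooth :
    IsBoundedSmoothKernel K1 ∧ IsBoundedSmoothKernel K2 ∧ IsBoundedSmoothKernel K3 := by
  rw [K1_eq, K2_eq, K3_eq]
  exact ⟨isBoundedSmoothKernel_inner_smul _, isBoundedSmoothKernel_inner_smul _,
    isBoundedSmoothKernel_inner_smul _⟩
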